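/- arXiv:1803.08962 — 2 statements merged into one kernel-verified Lean document; each statement's English description precedes it below -/
import Mathlib

section
/- Let β > 0 and 0 < α < p, set z := βp + α and Γ* := βz²/(2βp + α(1−β)). Then the function Γ ↦ Δ(Γ) := (1/4)[z/Γ + α(1+β)/(zβ)]² − z/(Γβ) is strictly increasing on the interval [Γ*, ∞), and Δ(Γ) → [α(1+β)/(2zβ)]² > 0 as Γ → ∞. -/
open Filter Topology

/-! `Δ(Γ)` is the quadratic `q(u) = (u + c)²/4 - u/β`, with `c = α(1+β)/(zβ)`, evaluated at
`u = z/Γ`. The vertex of `q` is `u = 2/β - c = z/Γ*`, so `q` decreases on `(-∞, z/Γ*]`, and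
`Γ ↦ z/Γ` maps `[Γ*, ∞)` decreasingly into that half-line. As `Γ → ∞`, `u → 0` and
`Δ(Γ) → q(0) = c²/4`. -/

lemma strictAntiOn_quadratic (a b : ℝ) :
    StrictAntiOn (fun u : ℝ => (1 / 4) * (u + b) ^ 2 - u / a) (Set.Iic (2 / a - b)) := by
  intro u hu v hv huv
  have hsum : u + v + 2 * b < 4 / a := by
    simp only [Set.mem_Iic] at hu hv
    linarith [show 4 / a = 2 * (2 / a) by ring]
  have hdiff : (1 / 4) * (v + b) ^ 2 - v / a - ((1 / 4) * (u + b) ^ 2 - u / a)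
      = (v - u) * ((u + v + 2 * b) - 4 / a) / 4 := by ring
  have : (v - u) * ((u + v + 2 * b) - 4 / a) < 0 :=
    mul_neg_of_pos_of_neg (sub_pos.mpr huv) (sub_neg.mpr hsum)
  simp only
  linarith

lemma strictAntiOn_const_div {c : ℝ} (hc : 0 < c) : StrictAntiOn (fun x : ℝ => c / x) (Set.Ioi 0) :=
  fun _ hx _ _ hxy => div_lt_div_of_pos_left hc hx hxy

lemma tendsto_comp_const_div_atTop {f : ℝ → ℝ} (hf : Continuous f) (c : ℝ) :
    Tendsto (fun x : ℝ => f (c / x)) atTop (𝓝 (f 0)) :=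
  (hf.tendsto 0).comp (tendsto_const_nhds.div_atTop tendsto_id)

/-- For `0 < α < p`, `β > 0`, `z = βp + α` and `Γ* = βz²/(2βp + α(1−β))`,
the discriminant `Δ(Γ) = (1/4)[z/Γ + α(1+β)/(zβ)]² − z/(Γβ)` is strictly
increasing on `[Γ*, ∞)` and tends to the positive limit `[α(1+β)/(2zβ)]²`
as `Γ → ∞`. -/
theorem discriminant_increasing_part (α β p : ℝ) (hβ : 0 < β) (hα : 0 < α)
    (hαp : α < p) :
    let z : ℝ := β * p + α
    let Γstar : ℝ := β * z ^ 2 / (2 * β * p + α * (1 - β))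
    let Δ : ℝ → ℝ := fun Γ =>
      (1 / 4) * (z / Γ + α * (1 + β) / (z * β)) ^ 2 - z / (Γ * β)
    StrictMonoOn Δ (Set.Ici Γstar) ∧
      Tendsto Δ atTop (nhds ((α * (1 + β) / (2 * z * β)) ^ 2)) ∧
      0 < (α * (1 + β) / (2 * z * β)) ^ 2 := by
  intro z Γstar Δ
  have hz : 0 < z := by positivity [hα.trans hαp]
  have hden : 0 < 2 * β * p + α * (1 - β) := by nlinarith [mul_pos hβ (sub_pos.mpr hαp)]
  have hΓstar : 0 < Γstar := by positivity
  set c := α * (1 + β) / (z * β)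
  set q : ℝ → ℝ := fun u => (1 / 4) * (u + c) ^ 2 - u / β
  have hΔ : Δ = fun Γ => q (z / Γ) := by
    funext Γ
    simp only [Δ, q, c, div_div]
  have hvertex : z / Γstar = 2 / β - c := by
    simp only [Γstar, c]
    field_simp
    simp only [z]
    ring
  refine ⟨?_, ?_, by positivity⟩
  · rw [hΔ]
    refine (strictAntiOn_quadratic β c).comp ((strictAntiOn_const_div hz).mono ?_) ?_
    · exact Set.Ici_subset_Ioi.mpr hΓstar
    · intro Γ hΓ
      rw [Set.mem_Iic, ← hvertex]
      exact div_le_div_of_nonneg_left hz.le hΓstar hΓ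
  · have hq0 : q 0 = (α * (1 + β) / (2 * z * β)) ^ 2 := by
      simp only [q, c]
      field_simp
      ring
    rw [hΔ, ← hq0]
    exact tendsto_comp_const_div_atTop (by fun_prop) z
end

section
/- Let α > 0, β > 0, p > 0 and Γ > β. Let f(x,y) = (Γ+1)x + y and let L₁ be the one-unit generator. Then there exist ε > 0 and a finite set A ⊂ (1/Γ)ℤ₊ × ℤ₊ such that (L₁ f)(x,y) ≤ −ε for all lattice points (x,y) ∈ ((1/Γ)ℤ₊ × ℤ₊) \ A; one may take A = {(x,y) ∈ (1/Γ)ℤ₊ × ℤ₊ : xy + αx + (Γ/β − 1)y ≤ (Γ+1)p + Γε}, which is a finite set. -/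
/-!
Since `f` is linear, every jump changes it by a constant: `-1/Γ` for the two jumps to
`(x - 1/Γ, y + 1)`, `1/Γ` for `(x + 1/Γ, y - 1)`, `(Γ+1)/Γ` for `(x + 1/Γ, y)` and `-1` for
`(x, y - 1)`. Hence `Γ · (L₁ f)(x,y) = (Γ+1)p - (xy + αx + (Γ/β - 1)y)`, and `Γ > β` makes the
coefficient of `y` positive. So `L₁ f ≤ -ε` exactly off the sublevel set `A`, which is finite
because on the lattice `x, y ≥ 0` and `αx + (Γ/β - 1)y` is bounded on `A` with positive
coefficients.
-/

open Set

noncomputable def oneUnitGenerator (α β p Γ : ℝ) (g : ℝ → ℝ → ℝ) (x y : ℝ) : ℝ :=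
  x * y * (g (x - 1 / Γ) (y + 1) - g x y)
  + α * x * (g (x - 1 / Γ) (y + 1) - g x y)
  + y * (g (x + 1 / Γ) (y - 1) - g x y)
  + p * (g (x + 1 / Γ) y - g x y)
  + β⁻¹ * y * (g x (y - 1) - g x y)

def oneUnitLyapunov (Γ : ℝ) (x y : ℝ) : ℝ := (Γ + 1) * x + y

def scaledLattice (Γ : ℝ) : Set (ℝ × ℝ) :=
  {q | (∃ k : ℕ, q.1 = (k : ℝ) / Γ) ∧ (∃ m : ℕ, q.2 = (m : ℝ))}

theorem oneUnitGenerator_oneUnitLyapunov {α β Γ : ℝ} (p : ℝ) (hβ : β ≠ 0) (hΓ : Γ ≠ 0)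
    (x y : ℝ) :
    oneUnitGenerator α β p Γ (oneUnitLyapunov Γ) x y =
      ((Γ + 1) * p - (x * y + α * x + (Γ / β - 1) * y)) / Γ := by
  simp only [oneUnitGenerator, oneUnitLyapunov]
  field_simp
  ring

theorem finite_setOf_natCast_le (r : ℝ) : {n : ℕ | (n : ℝ) ≤ r}.Finite :=
  (finite_Iic ⌊r⌋₊).subset fun _ hn => Nat.le_floor hn

theorem finite_setOf_linear_natCast_le {a b : ℝ} (ha : 0 < a) (hb : 0 < b) (c : ℝ) :
    {km : ℕ × ℕ | a * km.1 + b * km.2 ≤ c}.Finite := by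
  refine ((finite_setOf_natCast_le (c / a)).prod (finite_setOf_natCast_le (c / b))).subset ?_
  rintro ⟨k, m⟩ hkm
  have hk : 0 ≤ (k : ℝ) := k.cast_nonneg
  have hm : 0 ≤ (m : ℝ) := m.cast_nonneg
  have hsum : a * k + b * m ≤ c := hkm
  exact ⟨(le_div_iff₀' ha).2 (by nlinarith), (le_div_iff₀' hb).2 (by nlinarith)⟩

theorem finite_scaledLattice_sublevel {Γ a b : ℝ} (hΓ : 0 < Γ) (ha : 0 < a) (hb : 0 < b)
    (c : ℝ) :
    {q ∈ scaledLattice Γ | q.1 * q.2 + a * q.1 + b * q.2 ≤ c}.Finite := by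
  refine ((finite_setOf_linear_natCast_le (div_pos ha hΓ) hb c).image
    fun km : ℕ × ℕ => ((km.1 : ℝ) / Γ, (km.2 : ℝ))).subset ?_
  rintro ⟨x, y⟩ ⟨⟨⟨k, rfl⟩, ⟨m, rfl⟩⟩, hle⟩
  refine ⟨(k, m), ?_, rfl⟩
  have hxy : 0 ≤ (k : ℝ) / Γ * m := by positivity
  have hscale : a / Γ * k = a * (k / Γ) := by ring
  change a / Γ * k + b * m ≤ c
  linarith

theorem one_unit_lyapunov_drift_general (α β p Γ : ℝ) (hα : 0 < α) (hβ : 0 < β)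
    (hΓβ : β < Γ) :
    let L : (ℝ → ℝ → ℝ) → ℝ → ℝ → ℝ := fun g x y =>
      x * y * (g (x - 1 / Γ) (y + 1) - g x y)
      + α * x * (g (x - 1 / Γ) (y + 1) - g x y)
      + y * (g (x + 1 / Γ) (y - 1) - g x y)
      + p * (g (x + 1 / Γ) y - g x y)
      + β⁻¹ * y * (g x (y - 1) - g x y)
    let f : ℝ → ℝ → ℝ := fun x y => (Γ + 1) * x + y
    let lattice : Set (ℝ × ℝ) :=
      {q | (∃ k : ℕ, q.1 = (k : ℝ) / Γ) ∧ (∃ m : ℕ, q.2 = (m : ℝ))}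
    ∃ ε > (0 : ℝ),
      let A : Set (ℝ × ℝ) := {q ∈ lattice |
        q.1 * q.2 + α * q.1 + (Γ / β - 1) * q.2 ≤ (Γ + 1) * p + Γ * ε}
      A.Finite ∧ ∀ q ∈ lattice, q ∉ A → L f q.1 q.2 ≤ -ε := by
  intro L f lattice
  have hΓ : 0 < Γ := hβ.trans hΓβ
  have hcoeff : 0 < Γ / β - 1 := sub_pos.2 ((one_lt_div hβ).2 hΓβ)
  refine ⟨1, one_pos, finite_scaledLattice_sublevel hΓ hα hcoeff _, ?_⟩
  rintro ⟨x, y⟩ hq hA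
  have hlarge : (Γ + 1) * p + Γ * 1 < x * y + α * x + (Γ / β - 1) * y :=
    not_le.1 fun h => hA ⟨hq, h⟩
  change oneUnitGenerator α β p Γ (oneUnitLyapunov Γ) x y ≤ -1
  rw [oneUnitGenerator_oneUnitLyapunov p hβ.ne' hΓ.ne', div_le_iff₀ hΓ]
  linarith

/-- Recurrence criterion for the one-unit chain: if `Γ > β`, then for the
Lyapunov function `f(x,y) = (Γ+1)x + y` there exist `ε > 0` and a finite set
`A ⊂ (1/Γ)ℤ₊ × ℤ₊` (one may take
`A = {(x,y) : xy + αx + (Γ/β − 1)y ≤ (Γ+1)p + Γε}`) such that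
`(L₁ f)(x,y) ≤ −ε` for all lattice points outside `A`. -/
theorem one_unit_lyapunov_drift (α β p Γ : ℝ) (hα : 0 < α) (hβ : 0 < β)
    (hp : 0 < p) (hΓβ : β < Γ) :
    let L : (ℝ → ℝ → ℝ) → ℝ → ℝ → ℝ := fun g x y =>
      x * y * (g (x - 1 / Γ) (y + 1) - g x y)
      + α * x * (g (x - 1 / Γ) (y + 1) - g x y)
      + y * (g (x + 1 / Γ) (y - 1) - g x y)
      + p * (g (x + 1 / Γ) y - g x y)
      + β⁻¹ * y * (g x (y - 1) - g x y)
    let f : ℝ → ℝ → ℝ := fun x y => (Γ + 1) * x + y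
    let lattice : Set (ℝ × ℝ) :=
      {q | (∃ k : ℕ, q.1 = (k : ℝ) / Γ) ∧ (∃ m : ℕ, q.2 = (m : ℝ))}
    ∃ ε > (0 : ℝ),
      let A : Set (ℝ × ℝ) := {q ∈ lattice |
        q.1 * q.2 + α * q.1 + (Γ / β - 1) * q.2 ≤ (Γ + 1) * p + Γ * ε}
      A.Finite ∧ ∀ q ∈ lattice, q ∉ A → L f q.1 q.2 ≤ -ε :=
  one_unit_lyapunov_drift_general α β p Γ hα hβ hΓβ
end
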